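/- Divisibility in the combinatorial implementation of Probabilistic Serial: consider the combinatorial implementation of PS on any profile ≻ of strict orderings of n agents over m divisible goods, terminating after K steps. Then for every k ∈ {0, 1, …, K}, the quantity t^{(k)}·(n!)^k is an integer, and moreover x^{(k)}_{a,g}·(n!)^k is an integer for all agents a ∈ [n] and goods g ∈ [m]. -/

import Mathlib

/-- A strict total ordering over goods, given as a list from most preferred to
least preferred: it must be a duplicate-free enumeration of all goods. -/
def IsOrder {γ : Type*} [Fintype γ] (l : List γ) : Prop :=
  l.Nodup ∧ ∀ g : γ, g ∈ l

/-- An additive valuation `v` (given by its values on single goods) is consistent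
with the strict ordering `l` if strictly more valuable goods appear earlier. -/
def Consistent {γ : Type*} [DecidableEq γ] (v : γ → ℝ) (l : List γ) : Prop :=
  ∀ g g' : γ, v g > v g' → l.idxOf g < l.idxOf g'

/-- Agent `a`'s most preferred good in the set `S` of available goods. -/
def psTop {n m : ℕ} (pref : Fin n → List (Fin m)) (S : Finset (Fin m)) (a : Fin n) :
    Option (Fin m) :=
  (pref a).find? (fun g => decide (g ∈ S))

/-- `N(g, S)`: the set of agents whose most preferred available good is `g`. -/
def psN {n m : ℕ} (pref : Fin n → List (Fin m)) (S : Finset (Fin m)) (g : Fin m) :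
    Finset (Fin n) :=
  Finset.univ.filter (fun a => psTop pref S a = some g)

/-- The available goods currently being eaten by at least one agent. -/
def psActive {n m : ℕ} (pref : Fin n → List (Fin m)) (S : Finset (Fin m)) :
    Finset (Fin m) :=
  S.filter (fun g => (psN pref S g).Nonempty)

open scoped Classical in
/-- Combinatorial implementation of Probabilistic Serial.
`psState pref k = (S⁽ᵏ⁾, x⁽ᵏ⁾, t⁽ᵏ⁾)`: after step `k`, the set of available
goods, the partial allocation, and the length `t⁽ᵏ⁾` of step `k` (with `t⁽⁰⁾ = 0`). -/
noncomputable def psState {n m : ℕ} (pref : Fin n → List (Fin m)) :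
    ℕ → Finset (Fin m) × (Fin n → Fin m → ℝ) × ℝ
  | 0 => (Finset.univ, fun _ _ => 0, 0)
  | k + 1 =>
    let st := psState pref k
    let tg : Fin m → ℝ := fun g => (1 - ∑ a, st.2.1 a g) / ((psN pref st.1 g).card : ℝ)
    if h : (psActive pref st.1).Nonempty then
      let t := (psActive pref st.1).inf' h tg
      (st.1.filter (fun g => ¬(g ∈ psActive pref st.1 ∧ tg g = t)),
        fun a g => if psTop pref st.1 a = some g then st.2.1 a g + t else st.2.1 a g,
        t)
    else st

/-- The fractional allocation output by Probabilistic Serial (the mechanism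
terminates after at most `m` steps, since each step fully consumes a good). -/
noncomputable def psAlloc {n m : ℕ} (pref : Fin n → List (Fin m)) :
    Fin n → Fin m → ℝ :=
  (psState pref m).2.1


/-!
Induction on the step `k`. The remaining supply `1 - ∑ₐ x⁽ᵏ⁾_{a,g}` of a good is an integer
multiple of `(n!)⁻ᵏ`, and it is split among `|N(g, S⁽ᵏ⁾)|` agents, a number between `1` and `n`
and hence a divisor of `n!`. So every candidate step length, in particular their minimum
`t⁽ᵏ⁺¹⁾`, is an integer multiple of `(n!)⁻⁽ᵏ⁺¹⁾`, and so is every updated `x⁽ᵏ⁺¹⁾_{a,g}`.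
-/

open Finset

def ScalesToInt (c x : ℝ) : Prop := ∃ z : ℤ, x * c = z

namespace ScalesToInt

variable {c x y : ℝ}

theorem one_natCast_pow (N k : ℕ) : ScalesToInt ((N : ℝ) ^ k) 1 :=
  ⟨N ^ k, by push_cast; ring⟩

theorem add (hx : ScalesToInt c x) (hy : ScalesToInt c y) : ScalesToInt c (x + y) := by
  obtain ⟨z, hz⟩ := hx
  obtain ⟨w, hw⟩ := hy
  exact ⟨z + w, by push_cast; linear_combination hz + hw⟩

theorem sub (hx : ScalesToInt c x) (hy : ScalesToInt c y) : ScalesToInt c (x - y) := by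
  obtain ⟨z, hz⟩ := hx
  obtain ⟨w, hw⟩ := hy
  exact ⟨z - w, by push_cast; linear_combination hz - hw⟩

theorem sum {ι : Type*} (s : Finset ι) {f : ι → ℝ} (h : ∀ i ∈ s, ScalesToInt c (f i)) :
    ScalesToInt c (∑ i ∈ s, f i) := by
  induction s using Finset.cons_induction with
  | empty => exact ⟨0, by simp⟩
  | cons i s _ ih =>
    rw [sum_cons]
    exact (h i (mem_cons_self i s)).add (ih fun j hj => h j (mem_cons_of_mem hj))

theorem mul_natCast (hx : ScalesToInt c x) (N : ℕ) : ScalesToInt (c * N) x := by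
  obtain ⟨z, hz⟩ := hx
  exact ⟨z * N, by push_cast; linear_combination (N : ℝ) * hz⟩

theorem div_natCast (hx : ScalesToInt c x) {d N : ℕ} (hdN : d ∣ N) :
    ScalesToInt (c * N) (x / d) := by
  obtain ⟨z, hz⟩ := hx
  obtain ⟨q, rfl⟩ := hdN
  rcases eq_or_ne d 0 with rfl | hd
  · exact ⟨0, by simp⟩
  refine ⟨z * q, ?_⟩
  push_cast
  field_simp
  linear_combination (q : ℝ) * hz

theorem inf' {ι : Type*} {s : Finset ι} (hs : s.Nonempty) {f : ι → ℝ}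
    (h : ∀ i ∈ s, ScalesToInt c (f i)) : ScalesToInt c (s.inf' hs f) := by
  obtain ⟨i, hi, hfi⟩ := exists_mem_eq_inf' hs f
  exact hfi ▸ h i hi

end ScalesToInt

theorem card_psN_dvd_factorial {n m : ℕ} {pref : Fin n → List (Fin m)} {S : Finset (Fin m)}
    {g : Fin m} (hg : g ∈ psActive pref S) : (psN pref S g).card ∣ n.factorial := by
  refine Nat.dvd_factorial (card_pos.mpr (mem_filter.mp hg).2) ?_
  simpa using card_le_univ (psN pref S g)

theorem scalesToInt_psState {n m : ℕ} (pref : Fin n → List (Fin m)) :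
    ∀ k, ScalesToInt ((n.factorial : ℝ) ^ k) (psState pref k).2.2 ∧
      ∀ a g, ScalesToInt ((n.factorial : ℝ) ^ k) ((psState pref k).2.1 a g)
  | 0 => ⟨⟨0, by simp [psState]⟩, fun _ _ => ⟨0, by simp [psState]⟩⟩
  | k + 1 => by
    obtain ⟨ht, hx⟩ := scalesToInt_psState pref k
    have hstep : ∀ g ∈ psActive pref (psState pref k).1,
        ScalesToInt ((n.factorial : ℝ) ^ k * n.factorial)
          ((1 - ∑ a, (psState pref k).2.1 a g) / (psN pref (psState pref k).1 g).card) :=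
      fun g hg => ((ScalesToInt.one_natCast_pow _ k).sub
        (ScalesToInt.sum _ fun a _ => hx a g)).div_natCast (card_psN_dvd_factorial hg)
    rw [pow_succ, psState]
    split
    case isTrue hS =>
      have ht' := ScalesToInt.inf' hS hstep
      refine ⟨ht', fun a g => ?_⟩
      dsimp only
      split_ifs
      · exact ((hx a g).mul_natCast _).add ht'
      · exact (hx a g).mul_natCast _
    case isFalse => exact ⟨ht.mul_natCast _, fun a g => (hx a g).mul_natCast _⟩

theorem stmt11_general (n m : ℕ) (pref : Fin n → List (Fin m))
    (K : ℕ) :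
    ∀ k ≤ K,
      (∃ z : ℤ, (psState pref k).2.2 * (n.factorial : ℝ) ^ k = (z : ℝ)) ∧
        ∀ (a : Fin n) (g : Fin m),
          ∃ z : ℤ, (psState pref k).2.1 a g * (n.factorial : ℝ) ^ k = (z : ℝ) :=
  fun k _ => scalesToInt_psState pref k

/-- in the combinatorial implementation of Probabilistic Serial,
`t⁽ᵏ⁾·(n!)^k` and every `x⁽ᵏ⁾_{a,g}·(n!)^k` are integers, for all `k ≤ K`. -/
theorem stmt11 (n m : ℕ) (hn : 0 < n) (pref : Fin n → List (Fin m))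
    (horder : ∀ a, IsOrder (pref a))
    (K : ℕ) (hK : (psState pref K).1 = ∅)
    (hK' : ∀ k < K, (psState pref k).1 ≠ ∅) :
    ∀ k ≤ K,
      (∃ z : ℤ, (psState pref k).2.2 * (n.factorial : ℝ) ^ k = (z : ℝ)) ∧
        ∀ (a : Fin n) (g : Fin m),
          ∃ z : ℤ, (psState pref k).2.1 a g * (n.factorial : ℝ) ^ k = (z : ℝ) :=
  stmt11_general n m pref K
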